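/- For every integer t ≥ 3, the polynomial w₂^{2^t−4} + w₂^{2^{t−2}−1}·w₃^{2^{t−1}−2} + w₂^{2^{t−1}−3}·g_{2^t−2} belongs to w₃I_{2^t−1}; that is, w₂^{2^t−4} + w₂^{2^{t−2}−1}·w₃^{2^{t−1}−2} ≡ w₂^{2^{t−1}−3}·g_{2^t−2} (mod w₃I_{2^t−1}). -/

import Mathlib

open MvPolynomial Finset

noncomputable section

/-- `R2 = (ℤ/2)[w₂, w₃]`, the polynomial ring in two variables over `ℤ/2ℤ`. -/
abbrev R2 : Type := MvPolynomial (Fin 2) (ZMod 2)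

/-- The variable `w₂`. -/
def w2 : R2 := X 0

/-- The variable `w₃`. -/
def w3 : R2 := X 1

/-- The polynomials `g_r`: `g₀ = 1`, `g₁ = 0`, `g₂ = w₂`,
`g_{r+3} = w₂ g_{r+1} + w₃ g_r`. -/
def g : ℕ → R2
  | 0 => 1
  | 1 => 0
  | 2 => w2
  | (r+3) => w2 * g (r+1) + w3 * g r

/-- The ideal `I_n = (g_{n-2}, g_{n-1}, g_n)`. -/
def I (n : ℕ) : Ideal R2 := Ideal.span {g (n-2), g (n-1), g n}

/-! Auxiliary development -/


lemma t2z : (2 : R2) = 0 := by simpa using CharP.cast_eq_zero R2 2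

lemma g_add3 (r : ℕ) : g (r+3) = w2 * g (r+1) + w3 * g r := rfl

lemma g0 : g 0 = 1 := rfl
lemma g1 : g 1 = 0 := rfl
lemma g2 : g 2 = w2 := rfl
lemma g3 : g 3 = w3 := by
  rw [show (3:ℕ) = 0+3 from rfl, g_add3, g1, g0]; ring
lemma g4 : g 4 = w2^2 := by
  rw [show (4:ℕ) = 1+3 from rfl, g_add3, g2, g1]; ring

/-- doubling bundle -/
lemma gD (r : ℕ) : g (2*r+3) = w3 * g r^2 ∧ g (2*r+2) = g (r+1)^2 + w2 * g r^2
    ∧ g (2*r+4) = g (r+2)^2 + w2 * g (r+1)^2 := by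
  induction r with
  | zero =>
    refine ⟨?_, ?_, ?_⟩
    · rw [show 2*0+3 = 3 from rfl, g3, g0]; ring
    · rw [show 2*0+2 = 2 from rfl, g2, g1, g0]; ring
    · rw [show 2*0+4 = 4 from rfl, g4, g2, g1]; ring
  | succ r ih =>
    obtain ⟨h1, h2, h3⟩ := ih
    refine ⟨?_, ?_, ?_⟩
    · rw [show 2*(r+1)+3 = (2*r+2)+3 from by ring, g_add3,
        show 2*r+2+1 = 2*r+3 from rfl, h1, h2]
      linear_combination (w2*w3*g r^2) * t2z
    · rw [show 2*(r+1)+2 = 2*r+4 from by ring, h3]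
    · rw [show 2*(r+1)+4 = (2*r+3)+3 from by ring, g_add3,
        show 2*r+3+1 = 2*r+4 from rfl, h3, h1,
        show r+1+2 = r+3 from rfl, g_add3 r]
      linear_combination (-(w2*w3*(g r)*(g (r+1)))) * t2z

def BC : ℕ → R2 × R2
  | 0 => (w2, w3)
  | (i+1) => ((BC i).2^2 + w2 * (BC i).1^2, w3 * (BC i).1^2)

def Bb (i : ℕ) : R2 := (BC i).1
def Cc (i : ℕ) : R2 := (BC i).2

lemma Bb_succ (i : ℕ) : Bb (i+1) = Cc i^2 + w2 * Bb i^2 := rfl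
lemma Cc_succ (i : ℕ) : Cc (i+1) = w3 * Bb i^2 := rfl

lemma Bb_eq : ∀ i, Bb i = g (2^(i+2)-2) ∧ Cc i = g (2^(i+2)-1) := by
  intro i; induction i with
  | zero =>
    constructor
    · rw [show 2^(0+2)-2 = 2 from by norm_num, g2]; rfl
    · rw [show 2^(0+2)-1 = 3 from by norm_num, g3]; rfl
  | succ i ih =>
    have hK : 4 ≤ 2^(i+2) := by
      calc (4:ℕ) = 2^2 := by norm_num
      _ ≤ 2^(i+2) := Nat.pow_le_pow_right (by norm_num) (by omega)
    have ha : 2^(i+1+2) = 2*2^(i+2) := by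
      rw [show i+1+2 = (i+2)+1 from by omega, pow_succ]; ring
    constructor
    · rw [show 2^(i+1+2)-2 = 2*(2^(i+2)-2)+2 from by omega, (gD (2^(i+2)-2)).2.1,
        show 2^(i+2)-2+1 = 2^(i+2)-1 from by omega, ← ih.1, ← ih.2]
      rfl
    · rw [show 2^(i+1+2)-1 = 2*(2^(i+2)-2)+3 from by omega, (gD (2^(i+2)-2)).1, ← ih.1]
      rfl

lemma g_pow_sub3 : ∀ v, g (2^(v+2)-3) = 0 := by
  intro v; induction v with
  | zero => rw [show 2^(0+2)-3 = 1 from by norm_num, g1]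
  | succ v ih =>
    have hK : 4 ≤ 2^(v+2) := by
      calc (4:ℕ) = 2^2 := by norm_num
      _ ≤ 2^(v+2) := Nat.pow_le_pow_right (by norm_num) (by omega)
    have ha : 2^(v+1+2) = 2*2^(v+2) := by
      rw [show v+1+2 = (v+2)+1 from by omega, pow_succ]; ring
    rw [show 2^(v+1+2)-3 = 2*(2^(v+2)-3)+3 from by omega, (gD (2^(v+2)-3)).1, ih]
    ring

lemma g_mono : ∀ v, g (5*2^v-3) = w2^(2^v) * w3^(2^v-1) := by
  intro v; induction v with
  | zero => rw [show 5*2^0-3 = 2 from by norm_num, g2]; norm_num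
  | succ v ih =>
    have hv : 1 ≤ 2^v := Nat.one_le_two_pow
    have ha : (2:ℕ)^(v+1) = 2*2^v := by rw [pow_succ]; ring
    obtain ⟨m, hm⟩ : ∃ m, 2^v = m+1 := ⟨2^v-1, by omega⟩
    rw [show 5*2^(v+1)-3 = 2*(5*2^v-3)+3 from by omega, (gD (5*2^v-3)).1, ih,
      hm, show m+1-1 = m from by omega,
      show (2:ℕ)^(v+1) = 2*m+2 from by omega, show 2*m+2-1 = 2*m+1 from by omega]
    ring

lemma span_g (M : ℕ) (h0 : g M = 0) (j : ℕ) :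
    ∃ α β : R2, g (M+1+j) = α * g (M+1) + β * g (M+2) := by
  suffices h : ∀ n, (∃ α β : R2, g (M+1+n) = α * g (M+1) + β * g (M+2)) ∧
      (∃ α β : R2, g (M+1+(n+1)) = α * g (M+1) + β * g (M+2)) ∧
      (∃ α β : R2, g (M+1+(n+2)) = α * g (M+1) + β * g (M+2)) from (h j).1
  intro n; induction n with
  | zero =>
    refine ⟨⟨1, 0, by ring⟩, ⟨0, 1, ?_⟩, ⟨w2, 0, ?_⟩⟩
    · rw [show M+1+(0+1) = M+2 from by omega]; ring
    · rw [show M+1+(0+2) = M+3 from by omega, g_add3, h0]; ring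
  | succ n ih =>
    obtain ⟨⟨a0, b0, e0⟩, ⟨a1, b1, e1⟩, h2⟩ := ih
    refine ⟨⟨a1, b1, e1⟩, h2, ⟨w2*a1 + w3*a0, w2*b1 + w3*b0, ?_⟩⟩
    rw [show M+1+(n+1+2) = (M+1+n)+3 from by omega, g_add3,
      show M+1+n+1 = M+1+(n+1) from by omega, e0, e1]
    ring

lemma S2 : ∀ j, ∃ U V : R2,
    w3 * (w2^(8*2^j-3) * (Bb j)^4 + w2^(4*2^j-1) * w3^(8*2^j-4) + w2^(4*2^j+2) * w3^(8*2^j-6))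
      = U * Bb (j+2) + V * Cc (j+2) := by
  intro j; induction j with
  | zero =>
    refine ⟨w2^2*w3, 0, ?_⟩
    rw [show 8*2^0-3 = 5 from by norm_num, show 4*2^0-1 = 3 from by norm_num,
        show 8*2^0-4 = 4 from by norm_num, show 4*2^0+2 = 6 from by norm_num,
        show 8*2^0-6 = 2 from by norm_num,
        show Bb 2 = Cc 1^2 + w2*Bb 1^2 from rfl, show Cc 1 = w3*Bb 0^2 from rfl,
        show Bb 1 = Cc 0^2 + w2*Bb 0^2 from rfl, show Bb 0 = w2 from rfl,
        show Cc 0 = w3 from rfl]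
    linear_combination (-(w2^6*w3^3)) * t2z
  | succ j ih =>
    obtain ⟨U, V, hF⟩ := ih
    have hj : 1 ≤ 2^j := Nat.one_le_two_pow
    obtain ⟨m, hm⟩ : ∃ m, 2^j = m+1 := ⟨2^j-1, by omega⟩
    have p1 : (2:ℕ)^(j+1) = 2*(m+1) := by rw [pow_succ]; omega
    have p3 : (2:ℕ)^(j+3) = 8*(m+1) := by
      rw [show j+3 = j+1+1+1 from rfl, pow_succ, pow_succ]; omega
    have p5 : (2:ℕ)^(j+5) = 32*(m+1) := by
      rw [show j+5 = j+3+1+1 from rfl, pow_succ, pow_succ]; omega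
    rw [show 8*2^j-3 = 8*m+5 from by omega, show 4*2^j-1 = 4*m+3 from by omega,
        show 8*2^j-4 = 8*m+4 from by omega, show 4*2^j+2 = 4*m+6 from by omega,
        show 8*2^j-6 = 8*m+2 from by omega] at hF
    have hg1 := g_mono (j+3)
    rw [show 5*2^(j+3)-3 = 40*m+37 from by omega, show (2:ℕ)^(j+3) = 8*m+8 from by omega,
        show 8*m+8-1 = 8*m+7 from by omega] at hg1
    have h0 := g_pow_sub3 (j+3)
    rw [show j+3+2 = j+5 from rfl] at h0
    obtain ⟨α, β, hβ⟩ := span_g (2^(j+5)-3) h0 (8*m+7)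
    rw [show 2^(j+5)-3+1+(8*m+7) = 40*m+37 from by omega,
        show 2^(j+5)-3+1 = 32*m+30 from by omega,
        show 2^(j+5)-3+2 = 32*m+31 from by omega, hg1] at hβ
    have hb3 := (Bb_eq (j+3)).1
    have hc3 := (Bb_eq (j+3)).2
    rw [show j+3+2 = j+5 from rfl, show 2^(j+5)-2 = 32*m+30 from by omega] at hb3
    rw [show j+3+2 = j+5 from rfl, show 2^(j+5)-1 = 32*m+31 from by omega] at hc3
    rw [← hb3, ← hc3] at hβ
    have e1 : Cc (j+1) = w3 * Bb j^2 := rfl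
    have e2 : Bb (j+2) = Cc (j+1)^2 + w2 * Bb (j+1)^2 := rfl
    have e3 : Cc (j+2) = w3 * Bb (j+1)^2 := rfl
    have e4 : Bb (j+3) = Cc (j+2)^2 + w2 * Bb (j+2)^2 := rfl
    have e5 : Cc (j+3) = w3 * Bb (j+2)^2 := rfl
    rw [e2, e3, e1] at hF
    rw [e4, e5, e2, e3, e1] at hβ
    rw [show 8*2^(j+1)-3 = 16*m+13 from by omega, show 4*2^(j+1)-1 = 8*m+7 from by omega,
        show 8*2^(j+1)-4 = 16*m+12 from by omega, show 4*2^(j+1)+2 = 8*m+10 from by omega,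
        show 8*2^(j+1)-6 = 16*m+10 from by omega,
        show j+1+2 = j+3 from rfl, e4, e5, e2, e3, e1]
    refine ⟨w2*w3^3*V^2 + w2^2*w3^(8*m+2)*(w3^2+w2^3)*α,
      w2^(16*m+11) + w2*w3^2*U^2 + w2^2*w3^2*V^2 + w2^2*w3^(8*m+2)*(w3^2+w2^3)*β, ?_⟩
    have hF2 := congrArg (fun z : R2 => z ^ 2) hF
    linear_combination (w2*w3^3) * hF2 + (w2^2*w3^(8*m+2)*(w3^2+w2^3)) * hβ
      + (w2*w3^6*(Bb j)^4*(Bb (j+1))^2*U*V + w2^2*w3^4*(Bb (j+1))^4*U*V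
        - w2^2*w3^7*(Bb j)^8*V^2 - 2*w2^3*w3^5*(Bb j)^4*(Bb (j+1))^2*V^2
        - w2^4*w3^3*(Bb (j+1))^4*V^2 - w2^(8*m+10)*w3^(16*m+11)
        - w2^(8*m+13)*w3^(16*m+9) - w2^(12*m+9)*w3^(8*m+9)*(Bb j)^4
        - w2^(12*m+12)*w3^(8*m+7)*(Bb j)^4 - w2^(16*m+11)*w3^5*(Bb j)^8
        - w2^(16*m+12)*w3^3*(Bb j)^4*(Bb (j+1))^2) * t2z

lemma S1 : ∀ s, ∃ Xc Yc : R2,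
    w2^(8*2^s-4) + w2^(2*2^s-1) * w3^(4*2^s-2) + w2^(4*2^s-3) * Bb (s+1)
      = w3 * (Xc * Bb (s+1) + Yc * Cc (s+1)) := by
  intro s; induction s with
  | zero =>
    refine ⟨0, 0, ?_⟩
    rw [show 8*2^0-4 = 4 from by norm_num, show 2*2^0-1 = 1 from by norm_num,
        show 4*2^0-2 = 2 from by norm_num, show 4*2^0-3 = 1 from by norm_num,
        show Bb 1 = Cc 0^2 + w2*Bb 0^2 from rfl, show Bb 0 = w2 from rfl,
        show Cc 0 = w3 from rfl]
    linear_combination (w2*w3^2 + w2^4) * t2z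
  | succ s ih =>
    obtain ⟨Xc, Yc, hs⟩ := ih
    obtain ⟨U, V, hF⟩ := S2 s
    have hj : 1 ≤ 2^s := Nat.one_le_two_pow
    obtain ⟨m, hm⟩ : ∃ m, 2^s = m+1 := ⟨2^s-1, by omega⟩
    have p1 : (2:ℕ)^(s+1) = 2*(m+1) := by rw [pow_succ]; omega
    rw [show 8*2^s-4 = 8*m+4 from by omega, show 2*2^s-1 = 2*m+1 from by omega,
        show 4*2^s-2 = 4*m+2 from by omega, show 4*2^s-3 = 4*m+1 from by omega] at hs
    rw [show 8*2^s-3 = 8*m+5 from by omega, show 4*2^s-1 = 4*m+3 from by omega,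
        show 8*2^s-4 = 8*m+4 from by omega, show 4*2^s+2 = 4*m+6 from by omega,
        show 8*2^s-6 = 8*m+2 from by omega] at hF
    have e1 : Cc (s+1) = w3 * Bb s^2 := rfl
    have e2 : Bb (s+2) = Cc (s+1)^2 + w2 * Bb (s+1)^2 := rfl
    have e3 : Cc (s+2) = w3 * Bb (s+1)^2 := rfl
    rw [e1] at hs
    rw [e2, e3, e1] at hF
    rw [show 8*2^(s+1)-4 = 16*m+12 from by omega, show 2*2^(s+1)-1 = 4*m+3 from by omega,
        show 4*2^(s+1)-2 = 8*m+6 from by omega, show 4*2^(s+1)-3 = 8*m+5 from by omega,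
        show s+1+1 = s+2 from rfl, e2, e3, e1]
    refine ⟨w2^4*w3*Yc^2 + U, w2^4*Xc^2 + w2^5*Yc^2 + V, ?_⟩
    have hs2 := congrArg (fun z : R2 => z ^ 2) hs
    linear_combination (w2^4) * hs2 + w3 * hF
      + (w2^4*w3^3*(Bb s)^2*(Bb (s+1))*Xc*Yc - w2^5*w3^2*(Bb (s+1))^2*Yc^2
        - w2^(4*m+6)*w3^(8*m+4) - w2^(6*m+6)*w3^(4*m+2)*(Bb (s+1))
        - w2^(10*m+9)*w3^(4*m+2) - w2^(12*m+9)*(Bb (s+1))) * t2z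

/-- Proposition 4.4: for `t ≥ 3`,
`w₂^{2^t-4} + w₂^{2^{t-2}-1} w₃^{2^{t-1}-2} ≡ w₂^{2^{t-1}-3} g_{2^t-2} (mod w₃I_{2^t-1})`,
i.e. the sum of all three polynomials lies in `w₃I_{2^t-1} = {w₃ q : q ∈ I_{2^t-1}}`. -/
theorem prop_4_4 (t : ℕ) (ht : 3 ≤ t) :
    ∃ q ∈ I (2 ^ t - 1),
      w2 ^ (2 ^ t - 4) + w2 ^ (2 ^ (t - 2) - 1) * w3 ^ (2 ^ (t - 1) - 2)
        + w2 ^ (2 ^ (t - 1) - 3) * g (2 ^ t - 2) = w3 * q := by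
  obtain ⟨s, rfl⟩ : ∃ s, t = s+3 := ⟨t-3, by omega⟩
  obtain ⟨Xc, Yc, hP⟩ := S1 s
  have hb := (Bb_eq (s+1)).1
  have hc := (Bb_eq (s+1)).2
  rw [show s+1+2 = s+3 from rfl] at hb hc
  have hj : 1 ≤ 2^s := Nat.one_le_two_pow
  have p1 : (2:ℕ)^(s+1) = 2*2^s := by rw [pow_succ]; omega
  have p2 : (2:ℕ)^(s+2) = 4*2^s := by
    rw [show s+2 = s+1+1 from rfl, pow_succ]; omega
  have p3 : (2:ℕ)^(s+3) = 8*2^s := by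
    rw [show s+3 = s+2+1 from rfl, pow_succ]; omega
  refine ⟨Xc * g (2^(s+3)-2) + Yc * g (2^(s+3)-1), ?_, ?_⟩
  · have h1 : g (2^(s+3)-2) ∈ I (2^(s+3)-1) := by
      unfold I
      apply Ideal.subset_span
      rw [show 2^(s+3)-1-1 = 2^(s+3)-2 from by omega]
      simp
    have h2 : g (2^(s+3)-1) ∈ I (2^(s+3)-1) := by
      unfold I
      apply Ideal.subset_span
      simp
    exact Ideal.add_mem _ (Ideal.mul_mem_left _ _ h1) (Ideal.mul_mem_left _ _ h2)
  · rw [show s+3-2 = s+1 from by omega, show s+3-1 = s+2 from by omega,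
        show 2^(s+3)-4 = 8*2^s-4 from by omega, show 2^(s+1)-1 = 2*2^s-1 from by omega,
        show 2^(s+2)-2 = 4*2^s-2 from by omega, show 2^(s+2)-3 = 4*2^s-3 from by omega,
        ← hb, ← hc]
    exact hP

end
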